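/- Fix d ∈ ℕ and p ∈ [1,∞). There is a constant C such that for all σ ∈ ℕ and all smooth f, g : 𝕋^d → ℝ, one has | ‖f · g(σ·)‖_{L^p(𝕋^d)} − ‖f‖_{L^p(𝕋^d)} ‖g‖_{L^p(𝕋^d)} | ≤ C σ^{−1/p} ‖f‖_{C¹(𝕋^d)} ‖g‖_{L^p(𝕋^d)}. -/

import Mathlib

open MeasureTheory

namespace Stmt15Aux

open Set

/-- Real version of `NNReal.rpow_add_le_add_rpow`. -/
lemma rpow_add_le_add_rpow' {x y q : ℝ} (hx : 0 ≤ x) (hy : 0 ≤ y) (hq0 : 0 ≤ q) (hq1 : q ≤ 1) :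
    (x + y) ^ q ≤ x ^ q + y ^ q := by
  lift x to NNReal using hx
  lift y to NNReal using hy
  have := NNReal.rpow_add_le_add_rpow x y hq0 hq1
  rw [← NNReal.coe_le_coe] at this
  push_cast [NNReal.coe_rpow] at this
  exact_mod_cast this

lemma abs_rpow_sub_rpow_le {a b q : ℝ} (ha : 0 ≤ a) (hb : 0 ≤ b)
    (hq0 : 0 ≤ q) (hq1 : q ≤ 1) : |a ^ q - b ^ q| ≤ |a - b| ^ q := by
  have key : ∀ u v : ℝ, 0 ≤ v → v ≤ u → u ^ q - v ^ q ≤ (u - v) ^ q := by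
    intro u v hv hvu
    have h1 : u ^ q ≤ (u - v) ^ q + v ^ q := by
      have h2 := rpow_add_le_add_rpow' (x := u - v) (y := v) (by linarith) hv hq0 hq1
      simpa using h2
    linarith
  rcases le_total b a with h | h
  · rw [abs_of_nonneg (by linarith : (0:ℝ) ≤ a - b),
      abs_of_nonneg (sub_nonneg.2 (Real.rpow_le_rpow hb h hq0))]
    exact key a b hb h
  · rw [abs_of_nonpos (by linarith : a - b ≤ 0),
      abs_of_nonpos (sub_nonpos.2 (Real.rpow_le_rpow ha h hq0)), neg_sub, neg_sub]
    exact key b a ha h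

/-- `t ↦ t ^ p` is Lipschitz on `[0, M]` with constant `p * M ^ (p-1)`. -/
lemma rpow_lipschitz {p M a b : ℝ} (hp : 1 ≤ p) (hM : 0 ≤ M)
    (ha : a ∈ Icc 0 M) (hb : b ∈ Icc 0 M) :
    |a ^ p - b ^ p| ≤ p * M ^ (p - 1) * |a - b| := by
  have hbound : ∀ t ∈ Icc (0:ℝ) M, ‖p * t ^ (p - 1)‖ ≤ p * M ^ (p - 1) := by
    intro t ht
    rw [Real.norm_eq_abs, abs_mul, abs_of_nonneg (by linarith : (0:ℝ) ≤ p),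
      abs_of_nonneg (Real.rpow_nonneg ht.1 _)]
    have := Real.rpow_le_rpow ht.1 ht.2 (by linarith : (0:ℝ) ≤ p - 1)
    nlinarith
  have hderiv : ∀ t ∈ Icc (0:ℝ) M, HasDerivWithinAt (fun t : ℝ => t ^ p)
      (p * t ^ (p - 1)) (Icc 0 M) t := fun t _ =>
    (Real.hasDerivAt_rpow_const (Or.inr hp)).hasDerivWithinAt
  have := Convex.norm_image_sub_le_of_norm_hasDerivWithin_le hderiv hbound
    (convex_Icc 0 M) hb ha
  simpa [Real.norm_eq_abs] using this

variable {d : ℕ}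

lemma volume_cube : volume (Icc (0 : Fin d → ℝ) 1) = 1 := by
  rw [Real.volume_Icc_pi]
  simp

lemma integrableOn_cube {φ : (Fin d → ℝ) → ℝ} (hφ : Continuous φ) :
    IntegrableOn φ (Icc (0 : Fin d → ℝ) 1) volume :=
  hφ.continuousOn.integrableOn_compact isCompact_Icc

/-- Periodicity in every coordinate gives periodicity under integer-vector translations. -/
lemma periodic_vec {g : (Fin d → ℝ) → ℝ}
    (hg : ∀ (x : Fin d → ℝ) (i : Fin d), g (x + Pi.single i 1) = g x)
    (m : Fin d → ℕ) (x : Fin d → ℝ) : g ((fun i => (m i : ℝ)) + x) = g x := by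
  have hsingle : ∀ (n : ℕ) (i : Fin d) (x : Fin d → ℝ), g (x + Pi.single i (n : ℝ)) = g x := by
    intro n
    induction n with
    | zero => intro i x; simp
    | succ n ih =>
      intro i x
      have hsplit : (Pi.single i ((n + 1 : ℕ) : ℝ) : Fin d → ℝ)
          = Pi.single i (n : ℝ) + Pi.single i 1 := by
        funext j
        by_cases h : j = i <;> simp [Pi.single_apply, h]
      rw [hsplit, ← add_assoc, hg, ih]
  have hsum : ∀ s : Finset (Fin d), ∀ x : Fin d → ℝ,
      g (x + ∑ i ∈ s, Pi.single i ((m i : ℝ))) = g x := by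
    intro s
    induction s using Finset.induction_on with
    | empty => intro x; simp
    | insert _ _ hns ih =>
      intro x
      rw [Finset.sum_insert hns, add_comm (Pi.single _ _), ← add_assoc, hsingle, ih]
  have hrepr : (fun i => (m i : ℝ)) = ∑ i : Fin d, Pi.single i ((m i : ℝ)) := by
    funext j
    rw [Finset.sum_apply]
    exact (Fintype.sum_pi_single j fun i => (m i : ℝ)).symm
  rw [add_comm, hrepr, hsum]

lemma mem_cube_iff {σ : ℕ} (hσ : 0 < σ) (x : Fin d → ℝ) :
    (σ : ℝ) • x ∈ Icc (0 : Fin d → ℝ) ((σ : ℝ) • 1) ↔ x ∈ Icc (0 : Fin d → ℝ) 1 := by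
  have hσR : (0 : ℝ) < σ := by exact_mod_cast hσ
  simp only [Set.mem_Icc, Pi.le_def, Pi.smul_apply, Pi.zero_apply, Pi.one_apply, smul_eq_mul,
    mul_one]
  constructor
  · rintro ⟨h1, h2⟩
    exact ⟨fun i => nonneg_of_mul_nonneg_right (by simpa using h1 i) hσR,
      fun i => le_of_mul_le_mul_left (by simpa using h2 i) hσR⟩
  · rintro ⟨h1, h2⟩
    exact ⟨fun i => mul_nonneg hσR.le (h1 i), fun i => by nlinarith [h1 i, h2 i]⟩

/-- Key unfolding identity: the integral of `Φ (σ • x)` over the unit cube equals the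
average of the integrals of the translates `Φ (k + y)` over the σ-adic subcubes. -/
lemma key_identity (σ : ℕ) (hσ : 0 < σ) (Φ : (Fin d → ℝ) → ℝ) (hΦ : Continuous Φ) :
    ∫ x in Icc (0 : Fin d → ℝ) 1, Φ ((σ : ℝ) • x)
      = ((σ : ℝ) ^ d)⁻¹ * ∑ k : Fin d → Fin σ,
          ∫ y in Icc (0 : Fin d → ℝ) 1, Φ ((fun i => ((k i : ℕ) : ℝ)) + y) := by
  have hσR : (0 : ℝ) < σ := by exact_mod_cast hσ
  -- Step 1: scaling
  have step1 : ∫ x in Icc (0 : Fin d → ℝ) 1, Φ ((σ : ℝ) • x)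
      = ((σ : ℝ) ^ d)⁻¹ * ∫ y in Icc (0 : Fin d → ℝ) ((σ : ℝ) • 1), Φ y := by
    have h1 : ∀ x : Fin d → ℝ,
        Set.indicator (Icc (0 : Fin d → ℝ) 1) (fun x => Φ ((σ : ℝ) • x)) x
          = Set.indicator (Icc (0 : Fin d → ℝ) ((σ : ℝ) • 1)) Φ ((σ : ℝ) • x) := by
      intro x
      by_cases hx : x ∈ Icc (0 : Fin d → ℝ) 1
      · rw [Set.indicator_of_mem hx, Set.indicator_of_mem ((mem_cube_iff hσ x).2 hx)]
      · rw [Set.indicator_of_notMem hx,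
          Set.indicator_of_notMem (fun h => hx ((mem_cube_iff hσ x).1 h))]
    calc ∫ x in Icc (0 : Fin d → ℝ) 1, Φ ((σ : ℝ) • x)
        = ∫ x, Set.indicator (Icc (0 : Fin d → ℝ) 1) (fun x => Φ ((σ : ℝ) • x)) x :=
          (integral_indicator measurableSet_Icc).symm
      _ = ∫ x, Set.indicator (Icc (0 : Fin d → ℝ) ((σ : ℝ) • 1)) Φ ((σ : ℝ) • x) := by
          simp_rw [h1]
      _ = |((σ : ℝ) ^ Module.finrank ℝ (Fin d → ℝ))⁻¹|
            • ∫ x, Set.indicator (Icc (0 : Fin d → ℝ) ((σ : ℝ) • 1)) Φ x :=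
          Measure.integral_comp_smul volume _ (σ : ℝ)
      _ = ((σ : ℝ) ^ d)⁻¹ * ∫ y in Icc (0 : Fin d → ℝ) ((σ : ℝ) • 1), Φ y := by
          rw [integral_indicator measurableSet_Icc, Module.finrank_fin_fun, smul_eq_mul,
            abs_of_nonneg (by positivity)]
  rw [step1]
  congr 1
  -- Step 2: decompose the big cube into subcubes
  set B : (Fin d → Fin σ) → Set (Fin d → ℝ) :=
    fun k => Set.pi Set.univ (fun i => Ico ((k i : ℕ) : ℝ) (((k i : ℕ) : ℝ) + 1)) with hB
  have hBmeas : ∀ k, MeasurableSet (B k) := fun k =>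
    MeasurableSet.univ_pi fun i => measurableSet_Ico
  have hBsub : ∀ k : Fin d → Fin σ, B k ⊆
      Icc (fun i => ((k i : ℕ) : ℝ)) ((fun i => ((k i : ℕ) : ℝ)) + 1) := by
    intro k x hx
    rw [Set.mem_Icc]
    constructor <;> intro i <;>
      [exact (hx i (Set.mem_univ i)).1; exact le_of_lt (hx i (Set.mem_univ i)).2]
  have hint : ∀ k : Fin d → Fin σ, IntegrableOn Φ (B k) volume := by
    intro k
    exact (hΦ.continuousOn.integrableOn_compact isCompact_Icc).mono_set (hBsub k)
  have hdisj : Set.Pairwise ↑(Finset.univ : Finset (Fin d → Fin σ)) (Function.onFun Disjoint B) := by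
    intro k _ k' _ hkk'
    refine Set.disjoint_left.2 fun x hx hx' => hkk' ?_
    funext i
    have h1 := hx i (Set.mem_univ i)
    have h2 := hx' i (Set.mem_univ i)
    have : (k i : ℕ) = (k' i : ℕ) := by
      have e1 : ⌊x i⌋ = ((k i : ℕ) : ℤ) := by
        rw [Int.floor_eq_iff]
        constructor <;> [exact_mod_cast h1.1; exact_mod_cast h1.2]
      have e2 : ⌊x i⌋ = ((k' i : ℕ) : ℤ) := by
        rw [Int.floor_eq_iff]
        constructor <;> [exact_mod_cast h2.1; exact_mod_cast h2.2]
      exact_mod_cast e1.symm.trans e2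
    exact Fin.ext this
  have hunion : Set.pi Set.univ (fun _ : Fin d => Ico (0 : ℝ) σ) = ⋃ k : Fin d → Fin σ, B k := by
    ext x
    simp only [Set.mem_pi, Set.mem_univ, forall_true_left, Set.mem_iUnion, true_implies]
    constructor
    · intro hx
      refine ⟨fun i => ⟨⌊x i⌋₊, ?_⟩, fun i _ => ?_⟩
      · exact Nat.floor_lt (hx i).1 |>.2 (hx i).2
      · exact ⟨Nat.floor_le (hx i).1, Nat.lt_floor_add_one (x i)⟩
    · rintro ⟨k, hk⟩ i
      have := hk i (Set.mem_univ i)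
      constructor
      · exact le_trans (by positivity) this.1
      · refine lt_of_lt_of_le this.2 ?_
        have : (k i : ℕ) + 1 ≤ σ := (k i).isLt
        exact_mod_cast this
  -- a.e. equality of the Icc cube with the Ico cube
  have hconst : (σ : ℝ) • (1 : Fin d → ℝ) = fun _ => (σ : ℝ) := funext fun i => by simp
  have hae : Icc (0 : Fin d → ℝ) ((σ : ℝ) • 1)
      =ᵐ[volume] Set.pi Set.univ (fun _ : Fin d => Ico (0 : ℝ) σ) := by
    rw [hconst, volume_pi]
    exact (Measure.univ_pi_Ico_ae_eq_Icc (f := fun _ : Fin d => (0:ℝ))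
      (g := fun _ => (σ:ℝ))).symm
  have hsplit : ∫ y in Icc (0 : Fin d → ℝ) ((σ : ℝ) • 1), Φ y
      = ∑ k : Fin d → Fin σ, ∫ y in B k, Φ y := by
    rw [setIntegral_congr_set hae, hunion]
    have hbu : (⋃ k : Fin d → Fin σ, B k)
        = ⋃ k ∈ (Finset.univ : Finset (Fin d → Fin σ)), B k := by
      simp
    rw [hbu, integral_biUnion_finset Finset.univ (fun k _ => hBmeas k) hdisj
      (fun k _ => hint k)]
  rw [hsplit]
  refine Finset.sum_congr rfl fun k _ => ?_
  -- per-cube: a.e. equality with Icc, then translation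
  have haek : B k =ᵐ[volume]
      Icc (fun i => ((k i : ℕ) : ℝ)) (fun i => ((k i : ℕ) : ℝ) + 1) := by
    simp only [hB]
    rw [volume_pi]
    exact Measure.univ_pi_Ico_ae_eq_Icc (f := fun i => ((k i : ℕ) : ℝ))
      (g := fun i => ((k i : ℕ) : ℝ) + 1)
  rw [setIntegral_congr_set haek]
  have := (measurePreserving_add_left volume (fun i => ((k i : ℕ) : ℝ)))
    |>.setIntegral_preimage_emb (measurableEmbedding_addLeft _) Φ
      (Icc (fun i => ((k i : ℕ) : ℝ)) (fun i => ((k i : ℕ) : ℝ) + 1))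
  rw [← this, Set.preimage_const_add_Icc]
  have h1 : ((fun i => ((k i : ℕ) : ℝ)) - fun i => ((k i : ℕ) : ℝ)) = (0 : Fin d → ℝ) := by
    funext i; simp
  have h2 : ((fun i => ((k i : ℕ) : ℝ) + 1) - fun i => ((k i : ℕ) : ℝ)) = (1 : Fin d → ℝ) := by
    funext i; simp
  rw [h1, h2]


/-- Main quantitative estimate at the level of `p`-th powers. -/
lemma powEst (σ : ℕ) (hσ : 0 < σ) (F G : (Fin d → ℝ) → ℝ)
    (hF : Continuous F) (hG : Continuous G) (hGnn : ∀ y, 0 ≤ G y)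
    (hGper : ∀ (x : Fin d → ℝ) (i : Fin d), G (x + Pi.single i 1) = G x)
    (L : ℝ) (hL : 0 ≤ L)
    (hLip : ∀ u ∈ Icc (0 : Fin d → ℝ) 1, ∀ v ∈ Icc (0 : Fin d → ℝ) 1,
      |F u - F v| ≤ L * ‖u - v‖) :
    |(∫ x in Icc (0 : Fin d → ℝ) 1, F x * G ((σ : ℝ) • x))
        - (∫ x in Icc (0 : Fin d → ℝ) 1, F x) * ∫ x in Icc (0 : Fin d → ℝ) 1, G x|
      ≤ L / σ * ∫ x in Icc (0 : Fin d → ℝ) 1, G x := by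
  have hσR : (0 : ℝ) < σ := by exact_mod_cast hσ
  set I₀ := Icc (0 : Fin d → ℝ) 1 with hI₀
  set c := ∫ x in I₀, G x with hc
  have hc0 : 0 ≤ c := setIntegral_nonneg measurableSet_Icc fun y _ => hGnn y
  set u : (Fin d → Fin σ) → (Fin d → ℝ) → (Fin d → ℝ) :=
    fun k y => (σ : ℝ)⁻¹ • ((fun i => ((k i : ℕ) : ℝ)) + y) with hu
  have hucont : ∀ k, Continuous (u k) := fun k => by
    simp only [hu]; fun_prop
  have humem : ∀ k, ∀ y ∈ I₀, u k y ∈ I₀ := by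
    intro k y hy
    rw [hI₀, Set.mem_Icc] at hy ⊢
    constructor <;> intro i
    · have h1 : (0:ℝ) ≤ y i := hy.1 i
      simp only [hu, Pi.smul_apply, Pi.add_apply, smul_eq_mul, Pi.zero_apply]
      positivity
    · have h1 : y i ≤ 1 := hy.2 i
      have h2 : ((k i : ℕ) : ℝ) + 1 ≤ σ := by exact_mod_cast (k i).isLt
      simp only [hu, Pi.smul_apply, Pi.add_apply, smul_eq_mul, Pi.one_apply]
      have h3 : ((k i : ℕ) : ℝ) + y i ≤ σ := by linarith
      calc (σ:ℝ)⁻¹ * (((k i : ℕ) : ℝ) + y i) ≤ (σ:ℝ)⁻¹ * σ :=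
            mul_le_mul_of_nonneg_left h3 (by positivity)
        _ = 1 := inv_mul_cancel₀ (ne_of_gt hσR)
  have hdist : ∀ k, ∀ y ∈ I₀, ∀ z ∈ I₀, |F (u k y) - F (u k z)| ≤ L / σ := by
    intro k y hy z hz
    have h1 := hLip (u k y) (humem k y hy) (u k z) (humem k z hz)
    have h2 : u k y - u k z = (σ : ℝ)⁻¹ • (y - z) := by
      simp only [hu, ← smul_sub, add_sub_add_left_eq_sub]
    have h3 : ‖y - z‖ ≤ 1 := by
      rw [pi_norm_le_iff_of_nonneg zero_le_one]
      intro i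
      have hy1 : (0:ℝ) ≤ y i := hy.1 i
      have hy2 : y i ≤ 1 := hy.2 i
      have hz1 : (0:ℝ) ≤ z i := hz.1 i
      have hz2 : z i ≤ 1 := hz.2 i
      rw [Pi.sub_apply, Real.norm_eq_abs, abs_le]
      constructor <;> linarith
    rw [h2, norm_smul, Real.norm_eq_abs, abs_of_nonneg (by positivity : (0:ℝ) ≤ (σ:ℝ)⁻¹)]
      at h1
    refine le_trans h1 ?_
    rw [div_eq_mul_inv]
    have h4 : (σ:ℝ)⁻¹ * ‖y - z‖ ≤ (σ:ℝ)⁻¹ * 1 := mul_le_mul_of_nonneg_left h3 (by positivity)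
    rw [mul_one] at h4
    exact mul_le_mul_of_nonneg_left h4 hL
  have hIvol : volume I₀ = 1 := volume_cube
  set a : (Fin d → Fin σ) → ℝ := fun k => ∫ y in I₀, F (u k y) with ha
  have hintF : ∀ k, IntegrableOn (fun y => F (u k y)) I₀ volume := fun k =>
    integrableOn_cube (hF.comp (hucont k))
  have hintG : IntegrableOn G I₀ volume := integrableOn_cube hG
  have hintFG : ∀ k, IntegrableOn (fun y => F (u k y) * G y) I₀ volume := fun k =>
    integrableOn_cube ((hF.comp (hucont k)).mul hG)
  have hclose : ∀ k, ∀ y ∈ I₀, |F (u k y) - a k| ≤ L / σ := by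
    intro k y hy
    have heq : F (u k y) - a k = ∫ z in I₀, (F (u k y) - F (u k z)) := by
      rw [integral_sub (integrableOn_const (C := F (u k y)) (by rw [hIvol]; exact ENNReal.one_ne_top))
        (hintF k), setIntegral_const, Measure.real, hIvol]
      simp [ha]
    rw [heq]
    have hb := norm_setIntegral_le_of_norm_le_const (μ := volume) (s := I₀)
      (C := L / σ) (f := fun z => F (u k y) - F (u k z)) (by rw [hIvol]; exact ENNReal.one_lt_top)
      (fun z hz => by rw [Real.norm_eq_abs]; exact hdist k y hy z hz)
    rw [Real.norm_eq_abs, Measure.real, hIvol] at hb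
    simpa using hb
  have hperk : ∀ k, |(∫ y in I₀, F (u k y) * G y) - a k * c| ≤ L / σ * c := by
    intro k
    have heq : ∫ y in I₀, (F (u k y) - a k) * G y
        = (∫ y in I₀, F (u k y) * G y) - a k * c := by
      have h1 : ∀ y : Fin d → ℝ, (F (u k y) - a k) * G y
          = F (u k y) * G y - a k * G y := fun y => by ring
      simp_rw [h1]
      rw [integral_sub (hintFG k) (hintG.const_mul (a k)), hc, integral_const_mul]
    rw [← heq]
    calc |∫ y in I₀, (F (u k y) - a k) * G y|
        ≤ ∫ y in I₀, |F (u k y) - a k| * |G y| := by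
          have := norm_integral_le_integral_norm
            (μ := volume.restrict I₀) (f := fun y => (F (u k y) - a k) * G y)
          simpa [Real.norm_eq_abs, abs_mul] using this
      _ ≤ ∫ y in I₀, L / σ * G y := by
          refine setIntegral_mono_on ?_ (hintG.const_mul _) measurableSet_Icc ?_
          · exact integrableOn_cube
              ((((hF.comp (hucont k)).sub continuous_const).abs).mul hG.abs)
          · intro y hy
            rw [abs_of_nonneg (hGnn y)]
            exact mul_le_mul_of_nonneg_right (hclose k y hy) (hGnn y)
      _ = L / σ * c := by rw [hc, integral_const_mul]
  have hid1 : ∫ x in I₀, F x * G ((σ : ℝ) • x)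
      = ((σ : ℝ) ^ d)⁻¹ * ∑ k : Fin d → Fin σ, ∫ y in I₀, F (u k y) * G y := by
    have h := key_identity σ hσ (fun y => F ((σ : ℝ)⁻¹ • y) * G y)
      ((hF.comp (continuous_const_smul _)).mul hG)
    calc ∫ x in I₀, F x * G ((σ : ℝ) • x)
        = ∫ x in I₀, F ((σ : ℝ)⁻¹ • ((σ : ℝ) • x)) * G ((σ : ℝ) • x) :=
          (setIntegral_congr_fun measurableSet_Icc fun x _ => by
            rw [inv_smul_smul₀ (ne_of_gt hσR)]).symm
      _ = ((σ : ℝ) ^ d)⁻¹ * ∑ k : Fin d → Fin σ, ∫ y in I₀,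
            F ((σ : ℝ)⁻¹ • ((fun i => ((k i : ℕ) : ℝ)) + y))
              * G ((fun i => ((k i : ℕ) : ℝ)) + y) := h
      _ = ((σ : ℝ) ^ d)⁻¹ * ∑ k : Fin d → Fin σ, ∫ y in I₀, F (u k y) * G y := by
          congr 1
          refine Finset.sum_congr rfl fun k _ => ?_
          refine setIntegral_congr_fun measurableSet_Icc fun y _ => ?_
          rw [periodic_vec hGper (fun i => (k i : ℕ)) y]
  have hid2 : ∫ x in I₀, F x = ((σ : ℝ) ^ d)⁻¹ * ∑ k : Fin d → Fin σ, a k := by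
    have h := key_identity σ hσ (fun y => F ((σ : ℝ)⁻¹ • y))
      (hF.comp (continuous_const_smul _))
    calc ∫ x in I₀, F x
        = ∫ x in I₀, F ((σ : ℝ)⁻¹ • ((σ : ℝ) • x)) :=
          (setIntegral_congr_fun measurableSet_Icc fun x _ => by
            rw [inv_smul_smul₀ (ne_of_gt hσR)]).symm
      _ = ((σ : ℝ) ^ d)⁻¹ * ∑ k : Fin d → Fin σ, ∫ y in I₀,
            F ((σ : ℝ)⁻¹ • ((fun i => ((k i : ℕ) : ℝ)) + y)) := h
      _ = ((σ : ℝ) ^ d)⁻¹ * ∑ k : Fin d → Fin σ, a k := rfl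
  rw [hid1, hid2]
  have hsplit : ((σ:ℝ)^d)⁻¹ * (∑ k : Fin d → Fin σ, ∫ y in I₀, F (u k y) * G y)
      - (((σ:ℝ)^d)⁻¹ * ∑ k : Fin d → Fin σ, a k) * c
      = ((σ:ℝ)^d)⁻¹ * ∑ k : Fin d → Fin σ, ((∫ y in I₀, F (u k y) * G y) - a k * c) := by
    rw [Finset.sum_sub_distrib, ← Finset.sum_mul]
    ring
  rw [hsplit, abs_mul, abs_of_nonneg (by positivity : (0:ℝ) ≤ ((σ:ℝ)^d)⁻¹)]
  have hsum : |∑ k : Fin d → Fin σ, ((∫ y in I₀, F (u k y) * G y) - a k * c)|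
      ≤ (σ:ℝ)^d * (L / σ * c) := by
    refine le_trans (Finset.abs_sum_le_sum_abs _ _) ?_
    have h := Finset.sum_le_card_nsmul Finset.univ
      (fun k => |(∫ y in I₀, F (u k y) * G y) - a k * c|) (L / σ * c) (fun k _ => hperk k)
    rw [nsmul_eq_mul, Finset.card_univ, Fintype.card_fun, Fintype.card_fin, Fintype.card_fin]
      at h
    push_cast at h
    exact h
  calc ((σ:ℝ)^d)⁻¹ * |∑ k : Fin d → Fin σ, ((∫ y in I₀, F (u k y) * G y) - a k * c)|
      ≤ ((σ:ℝ)^d)⁻¹ * ((σ:ℝ)^d * (L / σ * c)) := by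
        exact mul_le_mul_of_nonneg_left hsum (by positivity)
    _ = L / σ * c := by field_simp
end Stmt15Aux

/-- `L^p` decorrelation lemma on `𝕋^d` (realized as 1-periodic functions on `ℝ^d`, with
norms over the unit cell): for `p ∈ [1,∞)` there is `C` such that for all `σ ∈ ℕ`,
`σ > 0`, and all smooth periodic `f, g`,
`| ‖f · g(σ·)‖_{L^p} − ‖f‖_{L^p} ‖g‖_{L^p} | ≤ C σ^{−1/p} ‖f‖_{C¹} ‖g‖_{L^p}`. -/
theorem stmt15 (d : ℕ) (hd : 0 < d) (p : ℝ) (hp : 1 ≤ p) :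
    ∃ C > 0, ∀ σ : ℕ, 0 < σ →
      ∀ f g : (Fin d → ℝ) → ℝ, ContDiff ℝ (⊤ : ℕ∞) f → ContDiff ℝ (⊤ : ℕ∞) g →
        (∀ (x : Fin d → ℝ) (i : Fin d), f (x + Pi.single i 1) = f x) →
        (∀ (x : Fin d → ℝ) (i : Fin d), g (x + Pi.single i 1) = g x) →
        |(∫ x in Set.Icc (0 : Fin d → ℝ) 1, |f x * g ((σ : ℝ) • x)| ^ p) ^ (1/p)
            - (∫ x in Set.Icc (0 : Fin d → ℝ) 1, |f x| ^ p) ^ (1/p)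
              * (∫ x in Set.Icc (0 : Fin d → ℝ) 1, |g x| ^ p) ^ (1/p)|
          ≤ C * (σ : ℝ) ^ (-(1:ℝ)/p)
              * ((⨆ x : Set.Icc (0 : Fin d → ℝ) 1, |f x.1|)
                  + ⨆ x : Set.Icc (0 : Fin d → ℝ) 1, ‖fderiv ℝ f x.1‖)
              * (∫ x in Set.Icc (0 : Fin d → ℝ) 1, |g x| ^ p) ^ (1/p) := by
  have hp0 : (0:ℝ) < p := lt_of_lt_of_le zero_lt_one hp
  refine ⟨p ^ (1/p), Real.rpow_pos_of_pos hp0 _, ?_⟩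
  intro σ hσ f g hf hg hfper hgper
  have hσR : (0:ℝ) < σ := by exact_mod_cast hσ
  set I₀ := Set.Icc (0 : Fin d → ℝ) 1 with hI₀
  haveI : Nonempty I₀ := ⟨⟨0, Set.mem_Icc.2 ⟨le_refl _, zero_le_one⟩⟩⟩
  set M₁ := ⨆ x : I₀, |f x.1| with hM₁
  set M₂ := ⨆ x : I₀, ‖fderiv ℝ f x.1‖ with hM₂
  have hb₁ : BddAbove (Set.range fun x : I₀ => |f x.1|) := by
    have h0 : (Set.range fun x : I₀ => |f x.1|) = (fun t => |f t|) '' I₀ :=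
      (Set.image_eq_range (fun t => |f t|) I₀).symm
    rw [h0]
    exact (isCompact_Icc.image (hf.continuous.abs)).bddAbove
  have hb₂ : BddAbove (Set.range fun x : I₀ => ‖fderiv ℝ f x.1‖) := by
    have h0 : (Set.range fun x : I₀ => ‖fderiv ℝ f x.1‖) = (fun t => ‖fderiv ℝ f t‖) '' I₀ :=
      (Set.image_eq_range (fun t => ‖fderiv ℝ f t‖) I₀).symm
    rw [h0]
    exact (isCompact_Icc.image ((hf.continuous_fderiv (by simp)).norm)).bddAbove
  have hM₁le : ∀ x ∈ I₀, |f x| ≤ M₁ := fun x hx => le_ciSup hb₁ ⟨x, hx⟩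
  have hM₂le : ∀ x ∈ I₀, ‖fderiv ℝ f x‖ ≤ M₂ := fun x hx => le_ciSup hb₂ ⟨x, hx⟩
  have hM₁0 : 0 ≤ M₁ := Real.iSup_nonneg fun x => abs_nonneg _
  have hM₂0 : 0 ≤ M₂ := Real.iSup_nonneg fun x => norm_nonneg _
  have hM0 : 0 ≤ M₁ + M₂ := add_nonneg hM₁0 hM₂0
  set Ap := ∫ x in I₀, |f x * g ((σ : ℝ) • x)| ^ p with hApdef
  set Bp := ∫ x in I₀, |f x| ^ p with hBpdef
  set Gp := ∫ x in I₀, |g x| ^ p with hGpdef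
  set F : (Fin d → ℝ) → ℝ := fun x => |f x| ^ p with hFdef
  set G : (Fin d → ℝ) → ℝ := fun y => |g y| ^ p with hGdef
  have hFc : Continuous F :=
    (Real.continuous_rpow_const (by linarith)).comp hf.continuous.abs
  have hGc : Continuous G :=
    (Real.continuous_rpow_const (by linarith)).comp hg.continuous.abs
  have hGnn : ∀ y, 0 ≤ G y := fun y => Real.rpow_nonneg (abs_nonneg _) p
  have hGper' : ∀ (x : Fin d → ℝ) (i : Fin d), G (x + Pi.single i 1) = G x := fun x i => by
    simp only [hGdef, hgper]
  set L := p * M₁ ^ (p - 1) * M₂ with hLdef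
  have hL0 : 0 ≤ L :=
    mul_nonneg (mul_nonneg hp0.le (Real.rpow_nonneg hM₁0 _)) hM₂0
  have hLip : ∀ u ∈ I₀, ∀ v ∈ I₀, |F u - F v| ≤ L * ‖u - v‖ := by
    intro u hu v hv
    have h2 := Stmt15Aux.rpow_lipschitz hp hM₁0 ⟨abs_nonneg (f u), hM₁le u hu⟩
      ⟨abs_nonneg (f v), hM₁le v hv⟩
    have h3 : abs (|f u| - |f v|) ≤ |f u - f v| := abs_abs_sub_abs_le_abs_sub _ _
    have h4 : |f u - f v| ≤ M₂ * ‖u - v‖ := by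
      have := Convex.norm_image_sub_le_of_norm_hasFDerivWithin_le
        (f := f) (f' := fderiv ℝ f) (s := I₀)
        (fun x _ => ((hf.differentiable (by simp)) x).hasFDerivAt.hasFDerivWithinAt)
        (fun x hx => hM₂le x hx) (convex_Icc _ _) hv hu
      simpa [Real.norm_eq_abs] using this
    calc |F u - F v| ≤ p * M₁ ^ (p-1) * abs (|f u| - |f v|) := h2
      _ ≤ p * M₁ ^ (p-1) * (M₂ * ‖u - v‖) :=
          mul_le_mul_of_nonneg_left (le_trans h3 h4)
            (mul_nonneg hp0.le (Real.rpow_nonneg hM₁0 _))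
      _ = L * ‖u - v‖ := by rw [hLdef]; ring
  have hkey := Stmt15Aux.powEst σ hσ F G hFc hGc hGnn hGper' L hL0 hLip
  have hBpF : (∫ x in I₀, F x) = Bp := rfl
  have hGpG : (∫ x in I₀, G x) = Gp := rfl
  rw [hBpF, hGpG] at hkey
  have hApeq : Ap = ∫ x in I₀, F x * G ((σ : ℝ) • x) := by
    rw [hApdef]
    refine setIntegral_congr_fun measurableSet_Icc fun x _ => ?_
    rw [abs_mul, Real.mul_rpow (abs_nonneg _) (abs_nonneg _)]
  have hAp0 : 0 ≤ Ap :=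
    setIntegral_nonneg measurableSet_Icc fun x _ => Real.rpow_nonneg (abs_nonneg _) p
  have hBp0 : 0 ≤ Bp :=
    setIntegral_nonneg measurableSet_Icc fun x _ => Real.rpow_nonneg (abs_nonneg _) p
  have hGp0 : 0 ≤ Gp :=
    setIntegral_nonneg measurableSet_Icc fun x _ => Real.rpow_nonneg (abs_nonneg _) p
  have hstep1 : |Ap - Bp * Gp| ≤ L / σ * Gp := by rw [hApeq]; exact hkey
  -- bound L by p * (M₁ + M₂) ^ p
  have hMp : (M₁ + M₂) ^ (p - 1) * (M₁ + M₂) = (M₁ + M₂) ^ p := by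
    rcases eq_or_lt_of_le hM0 with h0 | h0
    · rw [← h0, mul_zero, Real.zero_rpow (ne_of_gt hp0)]
    · rw [← Real.rpow_add_one (ne_of_gt h0), sub_add_cancel]
  have hLb : L ≤ p * (M₁ + M₂) ^ p := by
    have e1 : M₁ ^ (p-1) ≤ (M₁ + M₂) ^ (p-1) :=
      Real.rpow_le_rpow hM₁0 (le_add_of_nonneg_right hM₂0) (by linarith)
    have e2 : M₁ ^ (p-1) * M₂ ≤ (M₁ + M₂) ^ (p-1) * (M₁ + M₂) :=
      mul_le_mul e1 (le_add_of_nonneg_left hM₁0) hM₂0 (Real.rpow_nonneg hM0 _)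
    calc L = p * (M₁ ^ (p-1) * M₂) := by rw [hLdef]; ring
      _ ≤ p * ((M₁ + M₂) ^ (p-1) * (M₁ + M₂)) := mul_le_mul_of_nonneg_left e2 hp0.le
      _ = p * (M₁ + M₂) ^ p := by rw [hMp]
  have hstep2 : |Ap - Bp * Gp| ≤ p * (M₁ + M₂) ^ p / σ * Gp := by
    refine le_trans hstep1 ?_
    gcongr
  have hq0 : (0:ℝ) ≤ 1 / p := by positivity
  have hq1 : 1 / p ≤ 1 := (div_le_one hp0).2 hp
  have hexp : (-(1:ℝ))/p = -(1/p) := by rw [neg_div]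
  calc |Ap ^ (1/p) - Bp ^ (1/p) * Gp ^ (1/p)|
      = |Ap ^ (1/p) - (Bp * Gp) ^ (1/p)| := by rw [Real.mul_rpow hBp0 hGp0]
    _ ≤ |Ap - Bp * Gp| ^ (1/p) :=
        Stmt15Aux.abs_rpow_sub_rpow_le hAp0 (mul_nonneg hBp0 hGp0) hq0 hq1
    _ ≤ (p * (M₁ + M₂) ^ p / σ * Gp) ^ (1/p) :=
        Real.rpow_le_rpow (abs_nonneg _) hstep2 hq0
    _ = p ^ (1/p) * (σ:ℝ) ^ (-(1:ℝ)/p) * (M₁ + M₂) * Gp ^ (1/p) := by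
        rw [hexp]
        have h1 : p * (M₁ + M₂) ^ p / ↑σ * Gp
            = p * ((M₁ + M₂) ^ p * ((σ:ℝ)⁻¹ * Gp)) := by ring
        rw [h1, Real.mul_rpow hp0.le (by positivity),
          Real.mul_rpow (Real.rpow_nonneg hM0 _) (by positivity),
          Real.mul_rpow (by positivity) hGp0,
          ← Real.rpow_mul hM0, mul_one_div_cancel (ne_of_gt hp0), Real.rpow_one,
          Real.inv_rpow hσR.le, ← Real.rpow_neg hσR.le]
        ring
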